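/- Let L be a nonempty level datum whose largest level k₀ satisfies k₀ < 1, let ρ := Ram(L) and σ := k₀·ρ ∈ ℤ (so 0 < σ < ρ). Then: (a) for every element k of L other than the largest one, the rescaled rational (ρ/(ρ−σ))·k is not an integer; (b) the set L′ := {(ρ/(ρ−σ))·k : k ∈ L} with its integer elements removed (at most the rescaled largest level σ/(ρ−σ) can be an integer) is again a level datum; and (c) Ram(L′) = ρ − σ, which is strictly smaller than ρ = Ram(L). -/

import Mathlib

/-! Write every level as `k = s(k)/ρ` with `ρ = Ram L`. The least common denominator of a set `S`
of levels is `ρ / gcd(ρ, s(S))`, and after rescaling by `ρ/(ρ−σ)` the levels become `s(k)/(ρ−σ)`,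
so the same set has least common denominator `(ρ−σ) / gcd(ρ−σ, s(S))`; the levels that become
integers (those with `ρ−σ ∣ s(k)`) do not change this gcd. An initial segment contains `k₀`, so
`gcd s(S)` divides `σ` and `gcd(ρ−σ, s(S)) = gcd(ρ, s(S))`: the segment gcds are the same for `L`
and for the rescaled datum, and only the ambient modulus drops from `ρ` to `ρ−σ`. Hence the strict
monotonicity of the segment denominators carries over, and a non-largest level `k` with
`ρ−σ ∣ s(k)` would give two consecutive segments of `L` the same gcd. -/

open Finset

/-- The ramification order of a level datum: the least common denominator of its
elements, i.e. the lcm of the denominators (`ram ∅ = 1`). -/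
def ram (L : Finset ℚ) : ℕ := L.lcm Rat.den

/-- The least common denominator `d` of the "initial segment" of `L` consisting of the
elements `≥ k` (the elements come in decreasing order `k₀ > k₁ > ⋯`). -/
def segLcm (L : Finset ℚ) (k : ℚ) : ℕ := (L.filter (fun x => k ≤ x)).lcm Rat.den

/-- A level datum: a finite set of positive rationals such that the least common
denominators `d₀, d₁, …` of the initial segments (for the decreasing order) are all `≥ 2`
and form a strictly increasing sequence.  (Since the `d_j` are increasing, requiring
`d_j ≥ 2` for all `j` is equivalent to `d₀ ≥ 2`, i.e. to the largest element not being
an integer.) -/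
def IsLevelDatum (L : Finset ℚ) : Prop :=
  (∀ k ∈ L, 0 < k) ∧
  (∀ k ∈ L, 2 ≤ segLcm L k) ∧
  (∀ k ∈ L, ∀ k' ∈ L, k' < k → segLcm L k < segLcm L k')

/-- The largest level of `L` (junk value `0` for `L = ∅`). -/
def maxLevel (L : Finset ℚ) : ℚ := WithBot.unbotD 0 L.max

/-- The numerator `s(k) := k · Ram(L) ∈ ℤ` of a level `k` of `L`. -/
def numer (L : Finset ℚ) (k : ℚ) : ℤ := (k * (ram L : ℚ)).num

/-- `σ := k₀ · Ram(L) ∈ ℤ`, the numerator of the largest level. -/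
def sigma0 (L : Finset ℚ) : ℤ := numer L (maxLevel L)

/-- `gcd(s(x) for x ∈ s, Ram L)` : the gcd of `Ram L` together with the numerators of the
elements of a subset `s ⊆ L`. -/
def gSeg (L : Finset ℚ) (s : Finset ℚ) : ℕ :=
  Nat.gcd (ram L) (s.gcd (fun x => (numer L x).natAbs))

/-- The quantity
`B_L = (r − (s₀,r))·s₀ + Σᵢ ((s₀,…,s_{i−1},r) − (s₀,…,s_i,r))·s_i − r² + 1`
(`B_∅ = 0`), equal to the dimension of the elementary wild character variety. -/
def B (L : Finset ℚ) : ℤ :=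
  (∑ k ∈ L, ((gSeg L (L.filter (fun x => k < x)) : ℤ)
      - (gSeg L (L.filter (fun x => k ≤ x)) : ℤ)) * numer L k)
    - (ram L : ℤ) ^ 2 + 1

/-- A level datum is locally minimal at infinity if it is empty, or its largest level is
`< 1` or `> 2`. -/
def LocallyMinimal (L : Finset ℚ) : Prop :=
  L = ∅ ∨ maxLevel L < 1 ∨ 2 < maxLevel L

/-- Rescaling of a level datum by a factor `c`, removing the integer elements. -/
def rescale (L : Finset ℚ) (c : ℚ) : Finset ℚ :=
  (L.image (fun k => c * k)).filter (fun x => x.den ≠ 1)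

/-- The local simplification map `S_∞` on level data: if the largest level `k₀` satisfies
`1 < k₀ < 2`, rescale all the levels by `ρ/(σ−ρ)` (where `ρ = Ram L`, `σ = k₀·ρ`) and
remove the integer levels; otherwise do nothing. -/
def Sinf (L : Finset ℚ) : Finset ℚ :=
  if 1 < maxLevel L ∧ maxLevel L < 2 then
    rescale L ((ram L : ℚ) / ((sigma0 L : ℚ) - (ram L : ℚ)))
  else L

namespace Nat

theorem div_dvd_div_of_dvd_of_dvd {n c d : ℕ} (hc : c ∣ n) (hdc : d ∣ c) : n / c ∣ n / d := by
  rcases Nat.eq_zero_or_pos c with rfl | hc0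
  · simp [Nat.eq_zero_of_zero_dvd hc]
  refine ⟨c / d, ?_⟩
  rw [Nat.div_mul_div_comm hc hdc, Nat.mul_comm c d, Nat.mul_div_mul_right _ _ hc0]

theorem lcm_div_div_eq_div_gcd {n a b : ℕ} (hn : 0 < n) (ha : a ∣ n) (hb : b ∣ n) :
    Nat.lcm (n / a) (n / b) = n / Nat.gcd a b := by
  have hg : Nat.gcd a b ∣ n := (Nat.gcd_dvd_left a b).trans ha
  apply Nat.dvd_antisymm
  · exact Nat.lcm_dvd (div_dvd_div_of_dvd_of_dvd ha (Nat.gcd_dvd_left a b))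
      (div_dvd_div_of_dvd_of_dvd hb (Nat.gcd_dvd_right a b))
  · rw [Nat.div_dvd_iff_dvd_mul hg (Nat.pos_of_dvd_of_pos hg hn), ← Nat.gcd_mul_right]
    refine Nat.dvd_gcd ?_ ?_
    · conv_lhs => rw [← Nat.mul_div_cancel' ha]
      exact Nat.mul_dvd_mul_left a (Nat.dvd_lcm_left _ _)
    · conv_lhs => rw [← Nat.mul_div_cancel' hb]
      exact Nat.mul_dvd_mul_left b (Nat.dvd_lcm_right _ _)

theorem gcd_gcd_of_dvd_left {t a b : ℕ} (h : t ∣ a) : Nat.gcd t (Nat.gcd a b) = Nat.gcd t b := by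
  rw [← Nat.gcd_assoc, Nat.gcd_eq_left h]

end Nat

theorem Finset.gcd_gcd_filter_not_dvd {α : Type*} [DecidableEq α] (s : Finset α) (f : α → ℕ)
    (t : ℕ) : Nat.gcd t ((s.filter fun x => ¬ t ∣ f x).gcd f) = Nat.gcd t (s.gcd f) := by
  have hdvd : t ∣ (s.filter fun x => t ∣ f x).gcd f :=
    Finset.dvd_gcd fun x hx => (Finset.mem_filter.mp hx).2
  conv_rhs => rw [← Finset.filter_union_filter_not_eq (fun x => t ∣ f x) s, Finset.gcd_union,
    gcd_eq_nat_gcd, Nat.gcd_gcd_of_dvd_left hdvd]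

theorem Rat.den_eq_div_gcd_num_mul {x : ℚ} {n : ℕ} (hn : 0 < n) (hx : (x * n).den = 1) :
    x.den = n / Nat.gcd n (x * n).num.natAbs := by
  have hxn : x = ((x * n).num : ℚ) / ((n : ℤ) : ℚ) := by
    rw [Rat.coe_int_num_of_den_eq_one hx]
    push_cast
    field_simp
  conv_lhs => rw [hxn, ← Rat.divInt_eq_div, Rat.den_divInt]
  simp [hn.ne', Int.gcd]

theorem Finset.lcm_den_eq_div_gcd {s : Finset ℚ} {n : ℕ} (hn : 0 < n)
    (hs : ∀ x ∈ s, (x * n).den = 1) :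
    s.lcm Rat.den = n / Nat.gcd n (s.gcd fun x => (x * n).num.natAbs) := by
  classical
  induction s using Finset.induction with
  | empty => simp [Nat.div_self hn]
  | insert a s ha ih =>
    rw [Finset.lcm_insert, Finset.gcd_insert, ih fun x hx => hs x (Finset.mem_insert_of_mem hx),
      Rat.den_eq_div_gcd_num_mul hn (hs a (Finset.mem_insert_self a s)), lcm_eq_nat_lcm,
      gcd_eq_nat_gcd,
      Nat.lcm_div_div_eq_div_gcd hn (Nat.gcd_dvd_left _ _) (Nat.gcd_dvd_left _ _), Nat.gcd_assoc,
      Nat.gcd_left_comm _ n, ← Nat.gcd_assoc n n, Nat.gcd_self]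

section LevelDatum

variable {L : Finset ℚ} {t : ℕ}

theorem ram_pos (L : Finset ℚ) : 0 < ram L :=
  Nat.pos_of_ne_zero fun h => by
    obtain ⟨x, -, hx⟩ := Finset.lcm_eq_zero_iff.mp h
    exact x.den_nz hx

theorem den_mul_ram_eq_one {k : ℚ} (hk : k ∈ L) : (k * ram L).den = 1 := by
  obtain ⟨m, hm⟩ : k.den ∣ ram L := Finset.dvd_lcm hk
  rw [hm, Nat.cast_mul, ← mul_assoc, Rat.mul_den_eq_num]
  exact_mod_cast Rat.den_intCast (k.num * m)

theorem numer_cast {k : ℚ} (hk : k ∈ L) : (numer L k : ℚ) = k * ram L :=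
  Rat.coe_int_num_of_den_eq_one (den_mul_ram_eq_one hk)

theorem lcm_den_eq_ram_div_gSeg {s : Finset ℚ} (hs : s ⊆ L) :
    s.lcm Rat.den = ram L / gSeg L s :=
  Finset.lcm_den_eq_div_gcd (ram_pos L) fun _ hx => den_mul_ram_eq_one (hs hx)

theorem segLcm_eq_ram_div_gSeg (L : Finset ℚ) (k : ℚ) :
    segLcm L k = ram L / gSeg L (L.filter (k ≤ ·)) :=
  lcm_den_eq_ram_div_gSeg (Finset.filter_subset _ _)

theorem gSeg_self (L : Finset ℚ) : gSeg L L = 1 := by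
  have h : ram L / gSeg L L = ram L := (lcm_den_eq_ram_div_gSeg subset_rfl).symm
  exact (Nat.div_eq_self.mp h).resolve_left (ram_pos L).ne'

theorem ram_div_mul_eq_numer_div {k : ℚ} (hk : k ∈ L) :
    (ram L / t : ℚ) * k = (numer L k : ℚ) / (t : ℤ) := by
  rw [numer_cast hk]
  push_cast
  ring

theorem den_ram_div_mul_eq_one_iff {k : ℚ} (ht : 0 < t) (hk : k ∈ L) :
    ((ram L / t : ℚ) * k).den = 1 ↔ t ∣ (numer L k).natAbs := by
  rw [ram_div_mul_eq_numer_div hk, Rat.den_div_intCast_eq_one_iff _ _ (by exact_mod_cast ht.ne'),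
    Int.ofNat_dvd_left]

theorem rescale_filter_le {c : ℚ} (hc : 0 < c) (k : ℚ) :
    (rescale L c).filter (c * k ≤ ·) = rescale (L.filter (k ≤ ·)) c := by
  ext x
  simp only [rescale, Finset.mem_filter, Finset.mem_image]
  constructor
  · rintro ⟨⟨⟨y, hy, rfl⟩, hden⟩, hle⟩
    exact ⟨⟨y, ⟨hy, le_of_mul_le_mul_left hle hc⟩, rfl⟩, hden⟩
  · rintro ⟨⟨y, ⟨hy, hle⟩, rfl⟩, hden⟩
    exact ⟨⟨⟨y, hy, rfl⟩, hden⟩, mul_le_mul_of_nonneg_left hle hc.le⟩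

theorem lcm_den_rescale {s : Finset ℚ} (ht : 0 < t) (hs : s ⊆ L) :
    (rescale s (ram L / t)).lcm Rat.den = t / Nat.gcd t (s.gcd fun x => (numer L x).natAbs) := by
  have hnum : ∀ k ∈ s, (ram L / t : ℚ) * k * t = numer L k := fun k hk => by
    rw [ram_div_mul_eq_numer_div (hs hk), Int.cast_natCast,
      div_mul_cancel₀ _ (by exact_mod_cast ht.ne')]
  rw [Finset.lcm_den_eq_div_gcd ht, rescale, Finset.filter_image, Finset.gcd_image,
    ← Finset.gcd_gcd_filter_not_dvd s _ t]
  · congr 2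
    refine Finset.gcd_congr ?_ fun k hk => ?_
    · exact Finset.filter_congr fun k hk => (den_ram_div_mul_eq_one_iff ht (hs hk)).not
    · simp only [Function.comp_apply, hnum k (Finset.mem_filter.mp hk).1, Rat.num_intCast]
  · simp only [rescale, Finset.mem_filter, Finset.mem_image]
    rintro _ ⟨⟨k, hk, rfl⟩, -⟩
    rw [hnum k hk, Rat.den_intCast]

end LevelDatum

section LargestLevel

variable {L : Finset ℚ} {t : ℕ}

theorem maxLevel_eq_max' (hne : L.Nonempty) : maxLevel L = L.max' hne := by
  rw [maxLevel, ← Finset.coe_max' hne]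
  rfl

theorem maxLevel_mem (hne : L.Nonempty) : maxLevel L ∈ L :=
  maxLevel_eq_max' hne ▸ L.max'_mem hne

theorem le_maxLevel {k : ℚ} (hk : k ∈ L) : k ≤ maxLevel L :=
  maxLevel_eq_max' ⟨k, hk⟩ ▸ L.le_max' k hk

theorem maxLevel_mem_filter_le {k : ℚ} (hk : k ∈ L) : maxLevel L ∈ L.filter (k ≤ ·) :=
  Finset.mem_filter.mpr ⟨maxLevel_mem ⟨k, hk⟩, le_maxLevel hk⟩

theorem sigma0_pos (hne : L.Nonempty) (hpos : ∀ k ∈ L, 0 < k) : 0 < sigma0 L := by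
  have h : (0 : ℚ) < sigma0 L := by
    rw [sigma0, numer_cast (maxLevel_mem hne)]
    exact mul_pos (hpos _ (maxLevel_mem hne)) (by exact_mod_cast ram_pos L)
  exact_mod_cast h

theorem sigma0_lt_ram (hne : L.Nonempty) (hmax : maxLevel L < 1) : sigma0 L < ram L := by
  have h : (sigma0 L : ℚ) < ram L := by
    rw [sigma0, numer_cast (maxLevel_mem hne)]
    exact mul_lt_of_lt_one_left (by exact_mod_cast ram_pos L) hmax
  exact_mod_cast h

theorem gcd_eq_gSeg_of_maxLevel_mem {s : Finset ℚ} (hρ : ram L = t + (sigma0 L).natAbs)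
    (hs : maxLevel L ∈ s) : Nat.gcd t (s.gcd fun x => (numer L x).natAbs) = gSeg L s := by
  obtain ⟨m, hm⟩ : (s.gcd fun x => (numer L x).natAbs) ∣ (sigma0 L).natAbs := Finset.gcd_dvd hs
  rw [gSeg, hρ, hm, Nat.gcd_add_mul_left_left]

theorem gSeg_filter_le_dvd (hρ : ram L = t + (sigma0 L).natAbs) {k : ℚ} (hk : k ∈ L) :
    gSeg L (L.filter (k ≤ ·)) ∣ t :=
  gcd_eq_gSeg_of_maxLevel_mem hρ (maxLevel_mem_filter_le hk) ▸ Nat.gcd_dvd_left _ _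

theorem gSeg_filter_le_dvd_numer {k : ℚ} (hk : k ∈ L) :
    gSeg L (L.filter (k ≤ ·)) ∣ (numer L k).natAbs :=
  (Nat.gcd_dvd_right _ _).trans (Finset.gcd_dvd (Finset.mem_filter.mpr ⟨hk, le_rfl⟩))

theorem gSeg_filter_le_lt (hL : IsLevelDatum L) {k k' : ℚ} (hk : k ∈ L) (hk' : k' ∈ L)
    (h : k' < k) : gSeg L (L.filter (k' ≤ ·)) < gSeg L (L.filter (k ≤ ·)) := by
  have hd := hL.2.2 k hk k' hk' h
  rw [segLcm_eq_ram_div_gSeg, segLcm_eq_ram_div_gSeg] at hd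
  exact (Nat.div_lt_div_left (ram_pos L).ne' (Nat.gcd_dvd_left _ _) (Nat.gcd_dvd_left _ _)).mp hd

theorem ram_div_pos (ht : 0 < t) : 0 < (ram L / t : ℚ) :=
  div_pos (by exact_mod_cast ram_pos L) (by exact_mod_cast ht)

theorem segLcm_rescale (ht : 0 < t) (hρ : ram L = t + (sigma0 L).natAbs) {k : ℚ} (hk : k ∈ L) :
    segLcm (rescale L (ram L / t)) (ram L / t * k) = t / gSeg L (L.filter (k ≤ ·)) := by
  rw [segLcm, rescale_filter_le (ram_div_pos ht), lcm_den_rescale ht (Finset.filter_subset _ _),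
    gcd_eq_gSeg_of_maxLevel_mem hρ (maxLevel_mem_filter_le hk)]

theorem ram_rescale (ht : 0 < t) (hρ : ram L = t + (sigma0 L).natAbs) (hne : L.Nonempty) :
    ram (rescale L (ram L / t)) = t := by
  rw [ram, lcm_den_rescale ht subset_rfl, gcd_eq_gSeg_of_maxLevel_mem hρ (maxLevel_mem hne),
    gSeg_self, Nat.div_one]

theorem not_dvd_numer_of_lt_maxLevel (hL : IsLevelDatum L) (hρ : ram L = t + (sigma0 L).natAbs)
    {k : ℚ} (hk : k ∈ L) (hlt : k < maxLevel L) : ¬ t ∣ (numer L k).natAbs := by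
  intro hdvd
  set U := L.filter (k < ·)
  have hU : U.Nonempty := ⟨maxLevel L, Finset.mem_filter.mpr ⟨maxLevel_mem ⟨k, hk⟩, hlt⟩⟩
  obtain ⟨hk'L, hkk'⟩ := Finset.mem_filter.mp (U.min'_mem hU)
  have hseg : L.filter (k ≤ ·) = insert k (L.filter (U.min' hU ≤ ·)) := by
    ext x
    simp only [Finset.mem_filter, Finset.mem_insert]
    constructor
    · rintro ⟨hx, hkx⟩
      rcases hkx.eq_or_lt with rfl | hkx
      · exact Or.inl rfl
      · exact Or.inr ⟨hx, U.min'_le x (Finset.mem_filter.mpr ⟨hx, hkx⟩)⟩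
    · rintro (rfl | ⟨hx, hx'⟩)
      · exact ⟨hk, le_rfl⟩
      · exact ⟨hx, hkk'.le.trans hx'⟩
  have hgeq : gSeg L (L.filter (k ≤ ·)) = gSeg L (L.filter (U.min' hU ≤ ·)) := by
    rw [← gcd_eq_gSeg_of_maxLevel_mem hρ (maxLevel_mem_filter_le hk),
      ← gcd_eq_gSeg_of_maxLevel_mem hρ (maxLevel_mem_filter_le hk'L), hseg, Finset.gcd_insert,
      gcd_eq_nat_gcd, Nat.gcd_gcd_of_dvd_left hdvd]
  exact (gSeg_filter_le_lt hL hk'L hk hkk').ne hgeq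

theorem isLevelDatum_rescale (hL : IsLevelDatum L) (ht : 0 < t)
    (hρ : ram L = t + (sigma0 L).natAbs) : IsLevelDatum (rescale L (ram L / t)) := by
  simp only [IsLevelDatum, rescale, Finset.mem_filter, Finset.mem_image, and_imp,
    forall_exists_index, forall_apply_eq_imp_iff₂]
  refine ⟨fun k hk _ => mul_pos (ram_div_pos ht) (hL.1 k hk), fun k hk hden => ?_,
    fun k hk _ k' hk' _ hlt => ?_⟩
  · have hlt : gSeg L (L.filter (k ≤ ·)) < t := by
      refine (Nat.le_of_dvd ht (gSeg_filter_le_dvd hρ hk)).lt_of_ne fun h => hden ?_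
      exact (den_ram_div_mul_eq_one_iff ht hk).mpr (h ▸ gSeg_filter_le_dvd_numer hk)
    have h := (Nat.div_lt_div_left ht.ne' dvd_rfl (gSeg_filter_le_dvd hρ hk)).mpr hlt
    rwa [Nat.div_self ht, ← segLcm_rescale ht hρ hk] at h
  · rw [← rescale, segLcm_rescale ht hρ hk, segLcm_rescale ht hρ hk']
    exact (Nat.div_lt_div_left ht.ne' (gSeg_filter_le_dvd hρ hk) (gSeg_filter_le_dvd hρ hk')).mpr
      (gSeg_filter_le_lt hL hk hk' (lt_of_mul_lt_mul_left hlt (ram_div_pos ht).le))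

end LargestLevel

/-- if the largest level `k₀` of a nonempty level datum `L` satisfies
`k₀ < 1`, with `ρ = Ram(L)`, `σ = k₀·ρ ∈ ℤ` (so `0 < σ < ρ`), then (a) no level other
than the largest becomes an integer after rescaling by `ρ/(ρ−σ)`; (b) the rescaled set
with integer elements removed is again a level datum; (c) its ramification order is
`ρ − σ < ρ`. -/
theorem stmt_9 (L : Finset ℚ) (hL : IsLevelDatum L) (hne : L.Nonempty)
    (hmax : maxLevel L < 1) :
    (∀ k ∈ L, k ≠ maxLevel L →
      ((ram L : ℚ) / ((ram L : ℚ) - (sigma0 L : ℚ)) * k).den ≠ 1) ∧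
    IsLevelDatum (rescale L ((ram L : ℚ) / ((ram L : ℚ) - (sigma0 L : ℚ)))) ∧
    ((ram (rescale L ((ram L : ℚ) / ((ram L : ℚ) - (sigma0 L : ℚ)))) : ℤ)
        = (ram L : ℤ) - sigma0 L ∧
      ram (rescale L ((ram L : ℚ) / ((ram L : ℚ) - (sigma0 L : ℚ)))) < ram L) := by
  have hσ := sigma0_pos hne hL.1
  have hσρ := sigma0_lt_ram hne hmax
  set t := ram L - (sigma0 L).natAbs
  have hρ : ram L = t + (sigma0 L).natAbs := by omega
  have ht : 0 < t := by omega
  have hc : (ram L : ℚ) - sigma0 L = t := by exact_mod_cast (by omega : (ram L : ℤ) - sigma0 L = t)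
  rw [hc]
  refine ⟨fun k hk hk₀ => (den_ram_div_mul_eq_one_iff ht hk).not.mpr
      (not_dvd_numer_of_lt_maxLevel hL hρ hk ((le_maxLevel hk).lt_of_ne hk₀)),
    isLevelDatum_rescale hL ht hρ, ?_, ?_⟩ <;> rw [ram_rescale ht hρ hne] <;> omega
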